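/- For every natural number n ≥ 1 and real a ≥ 0, the sequence x_k = ⌊a · 10^{nk}⌋^{1/n} / 10^k (using integer n-th root of the floor) converges to a^{1/n} as k → ∞, with |x_k − a^{1/n}| ≤ 10^{−k}. -/

import Mathlib

/-!
Since `a * 10 ^ (n * k) = (a ^ (1 / n) * 10 ^ k) ^ n` and the integer `n`-th root of `⌊b ^ n⌋`
is `⌊b⌋` for `b ≥ 0`, the `k`-th approximation is exactly `a ^ (1 / n)` truncated after `k`
decimal digits.
-/

/-- Integer `n`-th root: the greatest `r` with `r ^ n ≤ m`. -/
def intNthRoot (n m : ℕ) : ℕ := Nat.findGreatest (fun r => r ^ n ≤ m) m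

section IntNthRoot

variable {n : ℕ}

lemma intNthRoot_pow_le (hn : n ≠ 0) (m : ℕ) : intNthRoot n m ^ n ≤ m :=
  Nat.findGreatest_spec (P := fun r => r ^ n ≤ m) (Nat.zero_le m) (by simp [zero_pow hn])

lemma lt_intNthRoot_add_one_pow (hn : n ≠ 0) (m : ℕ) : m < (intNthRoot n m + 1) ^ n := by
  by_contra! h
  exact Nat.findGreatest_is_greatest (Nat.lt_succ_self _)
    ((Nat.le_self_pow hn _).trans h) h

lemma intNthRoot_eq_of_pow_le_of_lt_add_one_pow (hn : n ≠ 0) {m r : ℕ} (hr : r ^ n ≤ m)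
    (hm : m < (r + 1) ^ n) : intNthRoot n m = r := by
  have upper : intNthRoot n m < r + 1 :=
    (Nat.pow_lt_pow_iff_left hn).1 ((intNthRoot_pow_le hn m).trans_lt hm)
  have lower : r < intNthRoot n m + 1 :=
    (Nat.pow_lt_pow_iff_left hn).1 (hr.trans_lt (lt_intNthRoot_add_one_pow hn m))
  omega

lemma intNthRoot_floor_pow (hn : n ≠ 0) {b : ℝ} (hb : 0 ≤ b) :
    intNthRoot n ⌊b ^ n⌋₊ = ⌊b⌋₊ := by
  apply intNthRoot_eq_of_pow_le_of_lt_add_one_pow hn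
  · rw [Nat.le_floor_iff (by positivity)]
    push_cast
    exact pow_le_pow_left₀ (Nat.cast_nonneg _) (Nat.floor_le hb) n
  · rw [Nat.floor_lt (by positivity)]
    push_cast
    exact pow_lt_pow_left₀ (Nat.lt_floor_add_one b) hb hn

end IntNthRoot

lemma abs_floor_mul_div_sub_le {x c : ℝ} (hx : 0 ≤ x) (hc : 0 < c) :
    |(⌊x * c⌋₊ : ℝ) / c - x| ≤ c⁻¹ := by
  have hle : (⌊x * c⌋₊ : ℝ) ≤ x * c := Nat.floor_le (by positivity)
  have hlt : x * c < ⌊x * c⌋₊ + 1 := Nat.lt_floor_add_one _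
  rw [show (⌊x * c⌋₊ : ℝ) / c - x = (⌊x * c⌋₊ - x * c) * c⁻¹ by field_simp, abs_mul,
    abs_of_pos (inv_pos.2 hc)]
  exact mul_le_of_le_one_left (inv_nonneg.2 hc.le) (abs_le.2 ⟨by linarith, by linarith⟩)

theorem rod_calculus_root_extraction (n : ℕ) (hn : 1 ≤ n) (a : ℝ) (ha : 0 ≤ a) :
    (∀ k : ℕ, |(intNthRoot n ⌊a * 10 ^ (n * k)⌋₊ : ℝ) / 10 ^ k - a ^ ((n : ℝ)⁻¹)|
        ≤ (10 ^ k)⁻¹) ∧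
    Filter.Tendsto (fun k : ℕ => (intNthRoot n ⌊a * 10 ^ (n * k)⌋₊ : ℝ) / 10 ^ k)
      Filter.atTop (nhds (a ^ ((n : ℝ)⁻¹))) := by
  have hn0 : n ≠ 0 := by omega
  have hroot : 0 ≤ a ^ ((n : ℝ)⁻¹) := by positivity
  have scaled (k : ℕ) : a * 10 ^ (n * k) = (a ^ ((n : ℝ)⁻¹) * 10 ^ k) ^ n := by
    rw [mul_pow, Real.rpow_inv_natCast_pow ha hn0, ← pow_mul, mul_comm k n]
  have error (k : ℕ) :
      |(intNthRoot n ⌊a * 10 ^ (n * k)⌋₊ : ℝ) / 10 ^ k - a ^ ((n : ℝ)⁻¹)| ≤ (10 ^ k)⁻¹ := by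
    rw [scaled, intNthRoot_floor_pow hn0 (by positivity)]
    exact abs_floor_mul_div_sub_le hroot (by positivity)
  refine ⟨error, ?_⟩
  have hsmall : Filter.Tendsto (fun k : ℕ => ((10 : ℝ) ^ k)⁻¹) Filter.atTop (nhds 0) :=
    tendsto_inv_atTop_zero.comp (tendsto_pow_atTop_atTop_of_one_lt (by norm_num))
  exact tendsto_iff_norm_sub_tendsto_zero.2 (squeeze_zero (fun _ => norm_nonneg _) error hsmall)
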